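/- Let F be a fixed finite set of graphs, let Π be a set of t-boundaried graphs, let G1 and G2 be t-boundaried graphs, and let G := G1 ⊕ G2. Then G contains no graph of Π as a boundaried minor if and only if there exists a pair (Π1, Π2) ∈ split_F(Π) such that, for i ∈ {1,2}, G_i contains no graph of Π_i as a boundaried minor. -/

import Mathlib

/-!
A minor model of `H ∈ Π` in `G1 ⊕ G2` splits along the pieces of `H`. The branch set of an
interior vertex of `H` contains no boundary vertex of the sum, hence none of the vertices shared
by `G1` and `G2`, so it lies inside one summand; adjacent interior vertices use the same one, so
every component of `H − δ(H)` is modelled inside a single summand. A boundary branch set contains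
at most one shared vertex, so its traces in `G1` and in `G2` stay connected. Hence each piece is
modelled in `G1` or in `G2`, and the traces are models of `⊕ Y` in `G1` and of `⊕ (pcs H \ Y)`
in `G2` for some `Y ⊆ pcs H`; conversely, such models glue back together along the shared
boundary vertices. So every split catches each `Π`-minor of `G1 ⊕ G2`, and if there is none,
`Π_i := Π ∪ {sums of pieces of members of Π that are not minors of G_i}` is a split witnessing it.
-/

namespace FDel

open scoped Classical

noncomputable section

/-- A boundaried `X`-labeled graph on the vertex universe `ℕ`: a (finite) vertex set,
a symmetric loopless adjacency relation, a labelset for each vertex, and a partial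
assignment of boundary indices to vertices. -/
structure BLG (X : Type) where
  verts : Set ℕ
  Adj : ℕ → ℕ → Prop
  label : ℕ → Set X
  bnd : ℕ → Option ℕ

variable {X : Type}

/-- Well-formedness of `G` as a `t`-boundaried `X`-labeled graph: the vertex set is finite,
adjacency is symmetric, loopless and supported on the vertex set, labels and boundary
indices live on vertices, the boundary assignment is injective, and indices lie in `{1,…,t}`. -/
def BLG.WF (t : ℕ) (G : BLG X) : Prop :=
  G.verts.Finite ∧
  (∀ u v, G.Adj u v → G.Adj v u) ∧
  (∀ v, ¬ G.Adj v v) ∧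
  (∀ u v, G.Adj u v → u ∈ G.verts ∧ v ∈ G.verts) ∧
  (∀ v, v ∉ G.verts → G.label v = ∅ ∧ G.bnd v = none) ∧
  (∀ u v i, G.bnd u = some i → G.bnd v = some i → u = v) ∧
  (∀ v i, G.bnd v = some i → v ∈ G.verts ∧ 1 ≤ i ∧ i ≤ t)

/-- Reachability inside the vertex set `S`. -/
def ReachIn (G : BLG X) (S : Set ℕ) (a b : ℕ) : Prop :=
  Relation.ReflTransGen (fun u v => G.Adj u v ∧ u ∈ S ∧ v ∈ S) a b

/-- `C` is (the vertex set of) a connected component of the subgraph of `G` induced by `S`. -/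
def IsCompOf (G : BLG X) (S C : Set ℕ) : Prop :=
  ∃ v ∈ S, C = {w | w ∈ S ∧ ReachIn G S v w}

/-- `G` is connected (and nonempty). -/
def BLG.Conn (G : BLG X) : Prop :=
  G.verts.Nonempty ∧ ∀ a ∈ G.verts, ∀ b ∈ G.verts, ReachIn G G.verts a b

/-- Isomorphism of boundaried labeled graphs: a bijection of the vertex sets preserving
adjacency, labelsets and boundary indices. -/
def Iso (G G' : BLG X) : Prop :=
  ∃ f : ℕ → ℕ, Set.BijOn f G.verts G'.verts ∧
    (∀ u ∈ G.verts, ∀ v ∈ G.verts, (G.Adj u v ↔ G'.Adj (f u) (f v))) ∧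
    (∀ v ∈ G.verts, G'.label (f v) = G.label v) ∧
    (∀ v ∈ G.verts, G'.bnd (f v) = G.bnd v)

/-- A boundaried labeled minor model of `H` in `G`. -/
structure MinorModel (H G : BLG X) (φ : ℕ → Set ℕ) : Prop where
  sub : ∀ v ∈ H.verts, φ v ⊆ G.verts
  nonempty : ∀ v ∈ H.verts, (φ v).Nonempty
  conn : ∀ v ∈ H.verts, ∀ a ∈ φ v, ∀ b ∈ φ v, ReachIn G (φ v) a b
  disj : ∀ u ∈ H.verts, ∀ v ∈ H.verts, u ≠ v → Disjoint (φ u) (φ v)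
  edge : ∀ u ∈ H.verts, ∀ v ∈ H.verts, H.Adj u v → ∃ a ∈ φ u, ∃ b ∈ φ v, G.Adj a b
  bnd_none : ∀ v ∈ H.verts, H.bnd v = none → ∀ a ∈ φ v, G.bnd a = none
  bnd_some : ∀ v ∈ H.verts, ∀ i, H.bnd v = some i →
    (∀ a ∈ φ v, G.bnd a = none ∨ G.bnd a = some i) ∧ ∃ a ∈ φ v, G.bnd a = some i
  labels : ∀ v ∈ H.verts, ∀ x, x ∈ H.label v → ∃ a ∈ φ v, x ∈ G.label a

/-- `H` is a boundaried labeled minor of `G`. -/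
def Minor (H G : BLG X) : Prop := ∃ φ, MinorModel H G φ

/-- Auxiliary injection for the right summand of `⊕`: a vertex of `G2` that is a boundary
vertex whose index also occurs in `G1` is identified with the corresponding vertex of `G1`. -/
def rmap (G1 G2 : BLG X) (v : ℕ) : ℕ :=
  if h : ∃ u, u ∈ G1.verts ∧ ∃ i, G2.bnd v = some i ∧ G1.bnd u = some i
  then 2 * Classical.choose h
  else 2 * v + 1

/-- The sum `G1 ⊕ G2`: disjoint union with boundary vertices of equal index identified. -/
def glue (G1 G2 : BLG X) : BLG X where
  verts := (fun v => 2 * v) '' G1.verts ∪ rmap G1 G2 '' G2.verts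
  Adj a b :=
    (∃ u ∈ G1.verts, ∃ v ∈ G1.verts, G1.Adj u v ∧ a = 2 * u ∧ b = 2 * v) ∨
    (∃ u ∈ G2.verts, ∃ v ∈ G2.verts, G2.Adj u v ∧ a = rmap G1 G2 u ∧ b = rmap G1 G2 v)
  label x := {l | (∃ v ∈ G1.verts, x = 2 * v ∧ l ∈ G1.label v) ∨
                  (∃ v ∈ G2.verts, x = rmap G1 G2 v ∧ l ∈ G2.label v)}
  bnd x :=
    if x ∈ (fun v => 2 * v) '' G1.verts ∪ rmap G1 G2 '' G2.verts then
      (if x % 2 = 0 then G1.bnd (x / 2) else G2.bnd (x / 2))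
    else none

/-- One-vertex piece on vertex `v`, with boundary index `i` and labelset `L`. -/
def singlePc (v i : ℕ) (L : Set X) : BLG X :=
  ⟨{v}, fun _ _ => False, fun x => if x = v then L else ∅,
   fun x => if x = v then some i else none⟩

/-- Two-vertex piece consisting of the single edge `{u,v}` with boundary indices `i`, `j`. -/
def edgePc (u v i j : ℕ) : BLG X :=
  ⟨{u, v}, fun a b => (a = u ∧ b = v) ∨ (a = v ∧ b = u), fun _ => ∅,
   fun x => if x = u then some i else if x = v then some j else none⟩

/-- The non-boundary vertices of `G`. -/
def interior (G : BLG X) : Set ℕ := {v | v ∈ G.verts ∧ G.bnd v = none}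

/-- The piece of `G` corresponding to a connected component `C` of `G − δ(G)`: `C` together
with its neighboring boundary vertices, with edges between boundary vertices removed and all
labels removed from boundary vertices. -/
def compPc (G : BLG X) (C : Set ℕ) : BLG X :=
  ⟨C ∪ {v | v ∈ G.verts ∧ G.bnd v ≠ none ∧ ∃ c ∈ C, G.Adj v c},
   fun a b => G.Adj a b ∧
     (a ∈ C ∪ {v | v ∈ G.verts ∧ G.bnd v ≠ none ∧ ∃ c ∈ C, G.Adj v c}) ∧
     (b ∈ C ∪ {v | v ∈ G.verts ∧ G.bnd v ≠ none ∧ ∃ c ∈ C, G.Adj v c}) ∧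
     ¬(G.bnd a ≠ none ∧ G.bnd b ≠ none),
   fun x => if x ∈ C then G.label x else ∅,
   fun x => if x ∈ C ∪ {v | v ∈ G.verts ∧ G.bnd v ≠ none ∧ ∃ c ∈ C, G.Adj v c}
            then G.bnd x else none⟩

/-- The set of pieces of `G`. -/
def pcs (G : BLG X) : Set (BLG X) :=
  {p | ∃ v ∈ G.verts, ∃ i, G.bnd v = some i ∧ p = singlePc v i (∅ : Set X)} ∪
  {p | ∃ v ∈ G.verts, ∃ i, G.bnd v = some i ∧ ∃ l ∈ G.label v, p = singlePc v i {l}} ∪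
  {p | ∃ u v i j, G.Adj u v ∧ G.bnd u = some i ∧ G.bnd v = some j ∧ p = edgePc u v i j} ∪
  {p | ∃ C, IsCompOf G (interior G) C ∧ p = compPc G C}

/-- The sum `⊕_{p ∈ P} p` of a set of pieces of a common graph; since pieces of a common
graph overlap exactly in boundary vertices (with equal indices), the sum is the union. -/
def unionOf (P : Set (BLG X)) : BLG X :=
  ⟨⋃ p ∈ P, p.verts,
   fun a b => ∃ p ∈ P, p.Adj a b,
   fun x => ⋃ p ∈ P, p.label x,
   fun x => if h : ∃ p, p ∈ P ∧ p.bnd x ≠ none then (Classical.choose h).bnd x else none⟩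

/-- `mpcs(G)`: all sums of nonempty subsets of the pieces of `G`, up to isomorphism. -/
def mpcs (G : BLG X) : Set (BLG X) :=
  {H | ∃ P ⊆ pcs G, P.Nonempty ∧ Iso H (unionOf P)}

/-- `mpcs` of a set of graphs. -/
def mpcsSet (S : Set (BLG X)) : Set (BLG X) := ⋃ G ∈ S, mpcs G

/-- Assign boundary index `i` to the vertex `v` of `G`. -/
def assignBnd (G : BLG X) (v i : ℕ) : BLG X :=
  ⟨G.verts, G.Adj, G.label, Function.update G.bnd v (some i)⟩

/-- Split the boundary vertex `u` of `G`: add a new vertex `w` with boundary index `i` and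
the edge `{u,w}`, reattach the edges `{u,b}` with `ME b` to `w`, and move the labels `l` of
`u` with `ML l` to `w`. -/
def splitVx (G : BLG X) (u w i : ℕ) (ME : ℕ → Prop) (ML : X → Prop) : BLG X :=
  ⟨insert w G.verts,
   fun a b =>
     (a = w ∧ b = u) ∨ (a = u ∧ b = w) ∨
     (a = w ∧ b ≠ w ∧ G.Adj u b ∧ ME b) ∨ (b = w ∧ a ≠ w ∧ G.Adj u a ∧ ME a) ∨
     (a ≠ w ∧ b ≠ w ∧ G.Adj a b ∧ ¬(a = u ∧ ME b) ∧ ¬(b = u ∧ ME a)),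
   fun x => if x = w then {l | l ∈ G.label u ∧ ML l}
            else if x = u then {l | l ∈ G.label u ∧ ¬ ML l}
            else G.label x,
   fun x => if x = w then some i else G.bnd x⟩

/-- One extension step turning a `t`-boundaried graph into a `(t+1)`-boundaried one (up to
isomorphism): keep the graph unchanged, assign index `t+1` to a non-boundary vertex, or
split a boundary vertex. -/
def ExtOne (t : ℕ) (H H' : BLG X) : Prop :=
  Iso H' H ∨
  (∃ v ∈ H.verts, H.bnd v = none ∧ Iso H' (assignBnd H v (t + 1))) ∨
  (∃ u ∈ H.verts, ∃ i, H.bnd u = some i ∧ ∃ w, w ∉ H.verts ∧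
    ∃ ME : ℕ → Prop, ∃ ML : X → Prop, Iso H' (splitVx H u w (t + 1) ME ML))

/-- `H' ∈ ext_{+k}(H)` for a `t`-boundaried graph `H`: `k` successive extension steps. -/
def ExtN (t : ℕ) : ℕ → BLG X → BLG X → Prop
  | 0, H, H' => Iso H' H
  | k + 1, H, H' => ∃ H'', ExtN t k H H'' ∧ ExtOne (t + k) H'' H'

/-- `ext_{+k}` of a set of `t`-boundaried graphs. -/
def extSet (t k : ℕ) (S : Set (BLG X)) : Set (BLG X) := {H' | ∃ H ∈ S, ExtN t k H H'}

/-- `mpcs_{+t}(S)` for a set `S` of unboundaried graphs. -/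
def mpcsPlus (t : ℕ) (S : Set (BLG X)) : Set (BLG X) := mpcsSet (extSet 0 t S)

/-- `forget(G,k)`: forget the boundary status of all boundary vertices with index `> k`. -/
def forget (G : BLG X) (k : ℕ) : BLG X :=
  ⟨G.verts, G.Adj, G.label, fun v => (G.bnd v).bind fun i => if i ≤ k then some i else none⟩

/-- Membership in a set of graphs, up to isomorphism. -/
def MemIso (H : BLG X) (S : Set (BLG X)) : Prop := ∃ H' ∈ S, Iso H H'

/-- `G1` and `G2` share no edge: no edge between boundary indices `i,j` occurs in both. -/
def EdgeDisjoint (G1 G2 : BLG X) : Prop :=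
  ¬ ∃ i j, (∃ u v, G1.Adj u v ∧ G1.bnd u = some i ∧ G1.bnd v = some j) ∧
           (∃ u v, G2.Adj u v ∧ G2.bnd u = some i ∧ G2.bnd v = some j)

/-- The merge `Π1 ⊙_F Π2`. -/
def Merge (F : Set (BLG X)) (t : ℕ) (P1 P2 : Set (BLG X)) : Set (BLG X) :=
  {G | G ∈ mpcsPlus t F ∧ ∀ G1 G2 : BLG X, G1.WF t → G2.WF t → EdgeDisjoint G1 G2 →
    Iso (glue G1 G2) G →
    (∃ H ∈ P1, Minor H G1) ∨ (∃ H ∈ P2, Minor H G2)}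

/-- `(P1, P2) ∈ split_F(P)`: both contain `P`; for every `G ∈ P` and every subset `Y` of its
pieces, the sum over `Y` was added to `P1` or the sum over the complement was added to `P2`;
and every member of `P1`/`P2` is accounted for by one of the two addition rules. -/
def SplitMem (F : Set (BLG X)) (t : ℕ) (P P1 P2 : Set (BLG X)) : Prop :=
  P ⊆ P1 ∧ P ⊆ P2 ∧
  (∀ G ∈ P, ∀ Y ⊆ pcs G, MemIso (unionOf Y) P1 ∨ MemIso (unionOf (pcs G \ Y)) P2) ∧
  (∀ H ∈ P1, H ∈ P ∨ (∃ G ∈ P, ∃ Y ⊆ pcs G, Iso H (unionOf Y)) ∨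
    (H ∈ mpcsPlus t F ∧ ∃ H', Minor H' H ∧ MemIso H' P1)) ∧
  (∀ H ∈ P2, H ∈ P ∨ (∃ G ∈ P, ∃ Y ⊆ pcs G, Iso H (unionOf Y)) ∨
    (H ∈ mpcsPlus t F ∧ ∃ H', Minor H' H ∧ MemIso H' P2))

/-- `folio*_{Q,t}(G)`: the boundaried labeled minors of `G` lying in `mpcs_{+t}(Q)`. -/
def folioStar (Q : Set (BLG X)) (t : ℕ) (G : BLG X) : Set (BLG X) :=
  {H | H ∈ mpcsPlus t Q ∧ Minor H G}

/-- The `(t+1)`-boundaried graphs in which boundary index `t+1` is assigned to a vertex. -/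
def defBnd (t : ℕ) : Set (BLG X) := {G | ∃ v ∈ G.verts, G.bnd v = some t}

lemma iso_refl (G : BLG X) : Iso G G :=
  ⟨id, Set.bijOn_id _, fun _ _ _ _ => Iff.rfl, fun _ _ => rfl, fun _ _ => rfl⟩

lemma Minor.of_iso {A H G : BLG Empty} (hm : Minor A G) (hiso : Iso A H) : Minor H G := by
  obtain ⟨f, hbij, hadj, -, hbnd⟩ := hiso
  obtain ⟨φ, hφ⟩ := hm
  set g := Function.invFunOn f A.verts
  have hg : ∀ w ∈ H.verts, g w ∈ A.verts := fun w hw => hbij.surjOn.mapsTo_invFunOn hw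
  have hfg : ∀ w ∈ H.verts, f (g w) = w := fun w hw => hbij.invOn_invFunOn.2 hw
  refine ⟨fun w => φ (g w), fun w hw => hφ.sub _ (hg w hw), fun w hw => hφ.nonempty _ (hg w hw),
    fun w hw => hφ.conn _ (hg w hw), fun u hu v hv huv => ?_, fun u hu v hv huv => ?_,
    fun w hw hb => ?_, fun w hw i hb => ?_, fun _ _ x => x.elim⟩
  · exact hφ.disj _ (hg u hu) _ (hg v hv) fun h => huv (by rw [← hfg u hu, ← hfg v hv, h])
  · refine hφ.edge _ (hg u hu) _ (hg v hv) ?_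
    rwa [hadj _ (hg u hu) _ (hg v hv), hfg u hu, hfg v hv]
  · exact hφ.bnd_none _ (hg w hw) (by rwa [← hbnd _ (hg w hw), hfg w hw])
  · exact hφ.bnd_some _ (hg w hw) i (by rwa [← hbnd _ (hg w hw), hfg w hw])

section Reach

variable {G : BLG X} {S T : Set ℕ} {a b : ℕ}

lemma ReachIn.mono (h : ReachIn G S a b) (hST : S ⊆ T) : ReachIn G T a b :=
  Relation.ReflTransGen.mono (fun _ _ hxy => ⟨hxy.1, hST hxy.2.1, hST hxy.2.2⟩) _ _ h

lemma ReachIn.map {G' : BLG X} {S' : Set ℕ} (f : ℕ → ℕ)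
    (hf : ∀ x y, G.Adj x y → x ∈ S → y ∈ S → G'.Adj (f x) (f y) ∧ f x ∈ S' ∧ f y ∈ S')
    (h : ReachIn G S a b) : ReachIn G' S' (f a) (f b) :=
  Relation.ReflTransGen.lift f (fun x y hxy => hf x y hxy.1 hxy.2.1 hxy.2.2) _ _ h

lemma ReachIn.symm (hsym : ∀ u v, G.Adj u v → G.Adj v u) (h : ReachIn G S a b) :
    ReachIn G S b a :=
  (@Relation.ReflTransGen.stdSymm _ _ ⟨fun _ _ hxy => ⟨hsym _ _ hxy.1, hxy.2.2, hxy.2.1⟩⟩).symm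
    _ _ h

lemma ReachIn.exists_adj_of_notMem_of_mem (h : ReachIn G S a b) (ha : a ∉ T) (hb : b ∈ T) :
    ∃ c d, G.Adj c d ∧ c ∈ S ∧ d ∈ S ∧ c ∉ T ∧ d ∈ T := by
  induction h with
  | refl => exact absurd hb ha
  | @tail c d _ hcd ih =>
    by_cases hc : c ∈ T
    · exact ih hc
    · exact ⟨c, d, hcd.1, hcd.2.1, hcd.2.2, hc, hb⟩

end Reach

section Pieces

variable {t : ℕ} {H : BLG X}

def compOf (H : BLG X) (w : ℕ) : Set ℕ := {x | x ∈ interior H ∧ ReachIn H (interior H) w x}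

lemma mem_pcs_single {v i : ℕ} (hv : v ∈ H.verts) (hb : H.bnd v = some i) :
    singlePc v i (∅ : Set X) ∈ pcs H :=
  Or.inl (Or.inl (Or.inl ⟨v, hv, i, hb, rfl⟩))

lemma mem_pcs_edge {u v i j : ℕ} (hadj : H.Adj u v) (hbu : H.bnd u = some i)
    (hbv : H.bnd v = some j) : edgePc u v i j ∈ pcs H :=
  Or.inl (Or.inr ⟨u, v, i, j, hadj, hbu, hbv, rfl⟩)

lemma mem_pcs_compOf {w : ℕ} (hw : w ∈ interior H) : compPc H (compOf H w) ∈ pcs H :=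
  Or.inr ⟨compOf H w, ⟨w, hw, rfl⟩, rfl⟩

lemma mem_compOf_self {w : ℕ} (hw : w ∈ interior H) : w ∈ compOf H w :=
  ⟨hw, Relation.ReflTransGen.refl⟩

lemma IsCompOf.eq_compOf (hsym : ∀ u v, H.Adj u v → H.Adj v u) {C : Set ℕ}
    (hC : IsCompOf H (interior H) C) {w : ℕ} (hw : w ∈ C) : C = compOf H w := by
  obtain ⟨v, -, rfl⟩ := hC
  ext x
  exact ⟨fun hx => ⟨hx.1, (hw.2.symm hsym).trans hx.2⟩, fun hx => ⟨hx.1, hw.2.trans hx.2⟩⟩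

lemma pcs_verts_subset (hH : H.WF t) {p : BLG X} (hp : p ∈ pcs H) : p.verts ⊆ H.verts := by
  rcases hp with (((⟨v, hv, _, _, rfl⟩ | ⟨v, hv, _, _, _, _, rfl⟩) |
    ⟨u, v, _, _, hadj, _, _, rfl⟩) | ⟨C, ⟨c, _, rfl⟩, rfl⟩)
  · rintro x rfl; exact hv
  · rintro x rfl; exact hv
  · rintro x (rfl | rfl)
    exacts [(hH.2.2.2.1 _ _ hadj).1, (hH.2.2.2.1 _ _ hadj).2]
  · rintro x (hx | hx)
    exacts [hx.1.1, hx.1]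

lemma pcs_bnd_eq {p : BLG X} (hp : p ∈ pcs H) {x : ℕ} (hx : x ∈ p.verts) :
    p.bnd x = H.bnd x := by
  rcases hp with (((⟨v, _, i, hb, rfl⟩ | ⟨v, _, i, hb, _, _, rfl⟩) |
    ⟨u, v, i, j, _, hbu, hbv, rfl⟩) | ⟨C, _, rfl⟩)
  · obtain rfl : x = v := hx
    simp [singlePc, hb]
  · obtain rfl : x = v := hx
    simp [singlePc, hb]
  · rcases hx with rfl | rfl
    · simp [edgePc, hbu]
    · by_cases hxu : x = u
      · subst hxu; simp [edgePc, hbu]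
      · simp [edgePc, hxu, hbv]
  · exact if_pos hx

lemma pcs_bnd_of_notMem {p : BLG X} (hp : p ∈ pcs H) {x : ℕ} (hx : x ∉ p.verts) :
    p.bnd x = none := by
  rcases hp with (((⟨v, _, _, _, rfl⟩ | ⟨v, _, _, _, _, _, rfl⟩) |
    ⟨u, v, _, _, _, _, _, rfl⟩) | ⟨C, _, rfl⟩)
  · exact if_neg hx
  · exact if_neg hx
  · simp only [edgePc, Set.mem_insert_iff, Set.mem_singleton_iff, not_or] at hx ⊢
    simp [hx.1, hx.2]
  · exact if_neg hx

lemma pcs_adj (hH : H.WF t) {p : BLG X} (hp : p ∈ pcs H) {a b : ℕ} (hab : p.Adj a b) :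
    H.Adj a b ∧ a ∈ p.verts ∧ b ∈ p.verts := by
  rcases hp with (((⟨v, _, _, _, rfl⟩ | ⟨v, _, _, _, _, _, rfl⟩) |
    ⟨u, v, _, _, hadj, _, _, rfl⟩) | ⟨C, _, rfl⟩)
  · exact hab.elim
  · exact hab.elim
  · rcases hab with ⟨rfl, rfl⟩ | ⟨rfl, rfl⟩
    · exact ⟨hadj, Or.inl rfl, Or.inr rfl⟩
    · exact ⟨hH.2.1 _ _ hadj, Or.inr rfl, Or.inl rfl⟩
  · exact ⟨hab.1, hab.2.1, hab.2.2.1⟩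

lemma eq_compPc_of_mem (hH : H.WF t) {p : BLG X} (hp : p ∈ pcs H) {x : ℕ} (hx : x ∈ p.verts)
    (hbx : H.bnd x = none) : p = compPc H (compOf H x) := by
  rcases hp with (((⟨v, _, i, hb, rfl⟩ | ⟨v, _, i, hb, _, _, rfl⟩) |
    ⟨u, v, i, j, _, hbu, hbv, rfl⟩) | ⟨C, hC, rfl⟩)
  · obtain rfl : x = v := hx
    simp_all
  · obtain rfl : x = v := hx
    simp_all
  · rcases hx with rfl | rfl <;> simp_all
  · have hxC : x ∈ C := hx.resolve_right fun h => h.2.1 hbx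
    rw [← hC.eq_compOf hH.2.1 hxC]

lemma exists_pcs_mem {w : ℕ} (hw : w ∈ H.verts) : ∃ p ∈ pcs H, w ∈ p.verts := by
  cases hbw : H.bnd w with
  | none => exact ⟨_, mem_pcs_compOf ⟨hw, hbw⟩, Or.inl (mem_compOf_self ⟨hw, hbw⟩)⟩
  | some i => exact ⟨singlePc w i ∅, mem_pcs_single hw hbw, rfl⟩

lemma exists_pcs_adj (hH : H.WF t) {a b : ℕ} (hab : H.Adj a b) : ∃ p ∈ pcs H, p.Adj a b := by
  obtain ⟨ha, hb⟩ := hH.2.2.2.1 _ _ hab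
  cases hba : H.bnd a with
  | none =>
    have haC := mem_compOf_self (H := H) ⟨ha, hba⟩
    refine ⟨_, mem_pcs_compOf ⟨ha, hba⟩, hab, Or.inl haC, ?_, fun h => h.1 hba⟩
    cases hbb : H.bnd b with
    | none => exact Or.inl ⟨⟨hb, hbb⟩, .single ⟨hab, ⟨ha, hba⟩, hb, hbb⟩⟩
    | some j => exact Or.inr ⟨hb, by simp [hbb], a, haC, hH.2.1 _ _ hab⟩
  | some i =>
    cases hbb : H.bnd b with
    | none =>
      refine ⟨_, mem_pcs_compOf ⟨hb, hbb⟩, hab, ?_, Or.inl (mem_compOf_self ⟨hb, hbb⟩),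
        fun h => h.2 hbb⟩
      exact Or.inr ⟨ha, by simp [hba], b, mem_compOf_self ⟨hb, hbb⟩, hab⟩
    | some j => exact ⟨edgePc a b i j, mem_pcs_edge hab hba hbb, Or.inl ⟨rfl, rfl⟩⟩

lemma mem_unionOf_verts {P : Set (BLG X)} {x : ℕ} :
    x ∈ (unionOf P).verts ↔ ∃ p ∈ P, x ∈ p.verts := by
  simp [unionOf]

lemma unionOf_verts_subset (hH : H.WF t) {P : Set (BLG X)} (hP : P ⊆ pcs H) :
    (unionOf P).verts ⊆ H.verts := fun _ hx =>
  let ⟨_, hp, hxp⟩ := mem_unionOf_verts.1 hx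
  pcs_verts_subset hH (hP hp) hxp

lemma unionOf_bnd_eq {P : Set (BLG X)} (hP : P ⊆ pcs H) {x : ℕ}
    (hx : x ∈ (unionOf P).verts) : (unionOf P).bnd x = H.bnd x := by
  have key : ∀ q ∈ P, q.bnd x ≠ none → q.bnd x = H.bnd x := fun q hq hne =>
    pcs_bnd_eq (hP hq) (by_contra fun hxq => hne (pcs_bnd_of_notMem (hP hq) hxq))
  show (if h : ∃ q, q ∈ P ∧ q.bnd x ≠ none then (Classical.choose h).bnd x else none) = _
  split_ifs with h
  · exact key _ (Classical.choose_spec h).1 (Classical.choose_spec h).2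
  · obtain ⟨p, hp, hxp⟩ := mem_unionOf_verts.1 hx
    push Not at h
    rw [← pcs_bnd_eq (hP hp) hxp, h p hp]

end Pieces

def BLG.BndInjOn (G : BLG X) : Prop :=
  ∀ x ∈ G.verts, ∀ y ∈ G.verts, ∀ i, G.bnd x = some i → G.bnd y = some i → x = y

/-- `G` is `G1 ⊕ G2`, the summands being placed inside `G` by `f1` and `f2`; labels are
ignored. With `f1 = f2 = id` this says that `G` is the union of its subgraphs `G1` and `G2`,
which meet exactly in common boundary vertices. -/
structure IsSum (G G1 G2 : BLG X) (f1 f2 : ℕ → ℕ) : Prop where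
  verts_eq : G.verts = f1 '' G1.verts ∪ f2 '' G2.verts
  adj_iff : ∀ x y, G.Adj x y ↔
    (∃ u ∈ G1.verts, ∃ v ∈ G1.verts, G1.Adj u v ∧ x = f1 u ∧ y = f1 v) ∨
    (∃ u ∈ G2.verts, ∃ v ∈ G2.verts, G2.Adj u v ∧ x = f2 u ∧ y = f2 v)
  bnd_left : ∀ u ∈ G1.verts, G.bnd (f1 u) = G1.bnd u
  bnd_right : ∀ v ∈ G2.verts, G.bnd (f2 v) = G2.bnd v
  injOn_left : Set.InjOn f1 G1.verts
  injOn_right : Set.InjOn f2 G2.verts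
  eq_iff : ∀ u ∈ G1.verts, ∀ v ∈ G2.verts,
    f1 u = f2 v ↔ ∃ i, G1.bnd u = some i ∧ G2.bnd v = some i

namespace IsSum

variable {G G1 G2 : BLG X} {f1 f2 : ℕ → ℕ}

lemma symm (hS : IsSum G G1 G2 f1 f2) : IsSum G G2 G1 f2 f1 where
  verts_eq := hS.verts_eq.trans (Set.union_comm _ _)
  adj_iff x y := (hS.adj_iff x y).trans or_comm
  bnd_left := hS.bnd_right
  bnd_right := hS.bnd_left
  injOn_left := hS.injOn_right
  injOn_right := hS.injOn_left
  eq_iff u hu v hv := eq_comm.trans <| (hS.eq_iff v hv u hu).trans <| by simp only [and_comm]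

lemma mem_verts_left (hS : IsSum G G1 G2 f1 f2) {u : ℕ} (hu : u ∈ G1.verts) :
    f1 u ∈ G.verts :=
  hS.verts_eq ▸ Or.inl ⟨u, hu, rfl⟩

lemma adj_left (hS : IsSum G G1 G2 f1 f2) {u v : ℕ} (hu : u ∈ G1.verts) (hv : v ∈ G1.verts)
    (h : G1.Adj u v) : G.Adj (f1 u) (f1 v) :=
  (hS.adj_iff _ _).2 (Or.inl ⟨u, hu, v, hv, h, rfl, rfl⟩)

lemma exists_adj_left (hS : IsSum G G1 G2 f1 f2) {x y : ℕ} (h : G.Adj x y)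
    (hxy : x ∉ f2 '' G2.verts ∨ y ∉ f2 '' G2.verts) :
    ∃ u ∈ G1.verts, ∃ v ∈ G1.verts, G1.Adj u v ∧ x = f1 u ∧ y = f1 v := by
  rcases (hS.adj_iff x y).1 h with h1 | ⟨u, hu, v, hv, -, rfl, rfl⟩
  · exact h1
  · exact (hxy.elim (· ⟨u, hu, rfl⟩) (· ⟨v, hv, rfl⟩)).elim

lemma mem_right_of_adj (hS : IsSum G G1 G2 f1 f2) {x y : ℕ} (h : G.Adj x y)
    (hxy : x ∉ f1 '' G1.verts ∨ y ∉ f1 '' G1.verts) :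
    x ∈ f2 '' G2.verts ∧ y ∈ f2 '' G2.verts := by
  obtain ⟨u, hu, v, hv, -, rfl, rfl⟩ := hS.symm.exists_adj_left h hxy
  exact ⟨⟨u, hu, rfl⟩, ⟨v, hv, rfl⟩⟩

lemma bnd_ne_none (hS : IsSum G G1 G2 f1 f2) {x : ℕ} (hx1 : x ∈ f1 '' G1.verts)
    (hx2 : x ∈ f2 '' G2.verts) : G.bnd x ≠ none := by
  obtain ⟨u, hu, rfl⟩ := hx1
  obtain ⟨v, hv, hvu⟩ := hx2
  obtain ⟨i, hi, -⟩ := (hS.eq_iff u hu v hv).1 hvu.symm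
  simp [hS.bnd_left u hu, hi]

lemma bndInjOn {t : ℕ} (hS : IsSum G G1 G2 f1 f2) (h1 : G1.WF t) (h2 : G2.WF t) :
    G.BndInjOn := by
  intro x hx y hy i hxi hyi
  rw [hS.verts_eq] at hx hy
  rcases hx with ⟨u, hu, rfl⟩ | ⟨u, hu, rfl⟩ <;> rcases hy with ⟨v, hv, rfl⟩ | ⟨v, hv, rfl⟩
  · rw [hS.bnd_left u hu] at hxi; rw [hS.bnd_left v hv] at hyi
    rw [h1.2.2.2.2.2.1 u v i hxi hyi]
  · rw [hS.bnd_left u hu] at hxi; rw [hS.bnd_right v hv] at hyi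
    exact (hS.eq_iff u hu v hv).2 ⟨i, hxi, hyi⟩
  · rw [hS.bnd_right u hu] at hxi; rw [hS.bnd_left v hv] at hyi
    exact ((hS.eq_iff v hv u hu).2 ⟨i, hyi, hxi⟩).symm
  · rw [hS.bnd_right u hu] at hxi; rw [hS.bnd_right v hv] at hyi
    rw [h2.2.2.2.2.2.1 u v i hxi hyi]

end IsSum

section Glue

variable {t : ℕ} {G1 G2 : BLG X}

lemma rmap_eq_of (h1 : G1.WF t) {u v i : ℕ} (hu : u ∈ G1.verts) (hv : G2.bnd v = some i)
    (hui : G1.bnd u = some i) : rmap G1 G2 v = 2 * u := by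
  have h : ∃ w, w ∈ G1.verts ∧ ∃ j, G2.bnd v = some j ∧ G1.bnd w = some j := ⟨u, hu, i, hv, hui⟩
  obtain ⟨-, j, hvj, hwj⟩ := Classical.choose_spec h
  obtain rfl : i = j := Option.some_injective _ (hv.symm.trans hvj)
  rw [rmap, dif_pos h, h1.2.2.2.2.2.1 _ _ _ hwj hui]

lemma rmap_cases (G1 G2 : BLG X) (v : ℕ) :
    (∃ u ∈ G1.verts, ∃ i, G2.bnd v = some i ∧ G1.bnd u = some i ∧ rmap G1 G2 v = 2 * u) ∨
      rmap G1 G2 v = 2 * v + 1 := by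
  by_cases h : ∃ u, u ∈ G1.verts ∧ ∃ i, G2.bnd v = some i ∧ G1.bnd u = some i
  · obtain ⟨hu, i, hvi, hui⟩ := Classical.choose_spec h
    exact Or.inl ⟨_, hu, i, hvi, hui, by rw [rmap, dif_pos h]⟩
  · exact Or.inr (by rw [rmap, dif_neg h])

lemma two_mul_eq_rmap_iff (h1 : G1.WF t) {u v : ℕ} (hu : u ∈ G1.verts) :
    2 * u = rmap G1 G2 v ↔ ∃ i, G1.bnd u = some i ∧ G2.bnd v = some i := by
  refine ⟨fun h => ?_, fun ⟨i, hui, hvi⟩ => (rmap_eq_of h1 hu hvi hui).symm⟩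
  rcases rmap_cases G1 G2 v with ⟨u', -, i, hvi, hui, heq⟩ | heq
  · obtain rfl : u = u' := by omega
    exact ⟨i, hui, hvi⟩
  · omega

lemma rmap_injOn (h2 : G2.WF t) : Set.InjOn (rmap G1 G2) G2.verts := by
  intro a _ b _ h
  rcases rmap_cases G1 G2 a with ⟨u, -, i, hai, hui, hea⟩ | hea <;>
    rcases rmap_cases G1 G2 b with ⟨u', -, i', hbi, hui', heb⟩ | heb <;> rw [hea, heb] at h
  · obtain rfl : u = u' := by omega
    obtain rfl : i = i' := Option.some_injective _ (hui.symm.trans hui')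
    exact h2.2.2.2.2.2.1 _ _ _ hai hbi
  all_goals omega

lemma glue_bnd_of_mem {x : ℕ} (hx : x ∈ (glue G1 G2).verts) :
    (glue G1 G2).bnd x = if x % 2 = 0 then G1.bnd (x / 2) else G2.bnd (x / 2) :=
  if_pos hx

lemma isSum_glue (h1 : G1.WF t) (h2 : G2.WF t) :
    IsSum (glue G1 G2) G1 G2 (fun u => 2 * u) (rmap G1 G2) where
  verts_eq := rfl
  adj_iff _ _ := Iff.rfl
  bnd_left u hu := by
    rw [glue_bnd_of_mem (Or.inl ⟨u, hu, rfl⟩)]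
    simp
  bnd_right v hv := by
    rw [glue_bnd_of_mem (Or.inr ⟨v, hv, rfl⟩)]
    rcases rmap_cases G1 G2 v with ⟨u, -, i, hvi, hui, heq⟩ | heq <;> rw [heq]
    · simp [hui, hvi]
    · rw [if_neg (by omega), show (2 * v + 1) / 2 = v by omega]
  injOn_left _ _ _ _ h := by simp only at h; omega
  injOn_right := rmap_injOn h2
  eq_iff _ hu _ _ := two_mul_eq_rmap_iff h1 hu

end Glue

section Models

variable {H G : BLG X} {φ : ℕ → Set ℕ}

lemma MinorModel.bnd_of_mem (hφ : MinorModel H G φ) {v a i : ℕ} (hv : v ∈ H.verts)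
    (ha : a ∈ φ v) (hai : G.bnd a = some i) : H.bnd v = some i := by
  cases hbv : H.bnd v with
  | none => simp [hφ.bnd_none v hv hbv a ha] at hai
  | some j =>
    rcases (hφ.bnd_some v hv j hbv).1 a ha with h | h <;> rw [h] at hai
    · simp at hai
    · rw [hai]

lemma MinorModel.eq_of_bnd_ne_none (hφ : MinorModel H G φ)
    (hinj : G.BndInjOn) {w x y : ℕ} (hw : w ∈ H.verts) (hx : x ∈ φ w) (hy : y ∈ φ w)
    (hbx : G.bnd x ≠ none) (hby : G.bnd y ≠ none) : x = y := by
  cases hbw : H.bnd w with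
  | none => exact (hbx (hφ.bnd_none w hw hbw x hx)).elim
  | some i =>
    have hidx := (hφ.bnd_some w hw i hbw).1
    exact hinj x (hφ.sub w hw hx) y (hφ.sub w hw hy) i ((hidx x hx).resolve_left hbx)
      ((hidx y hy).resolve_left hby)

end Models

lemma IsSum.minorModel_image {H G G1 G2 : BLG Empty} {f1 f2 : ℕ → ℕ} {φ : ℕ → Set ℕ}
    (hS : IsSum G G1 G2 f1 f2) (hφ : MinorModel H G1 φ) :
    MinorModel H G (fun v => f1 '' φ v) := by
  refine ⟨?_, fun v hv => (hφ.nonempty v hv).image _, ?_, fun u hu v hv huv => ?_, ?_, ?_, ?_,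
    fun _ _ x => x.elim⟩
  · rintro v hv _ ⟨a, ha, rfl⟩
    exact hS.mem_verts_left (hφ.sub v hv ha)
  · rintro v hv _ ⟨a, ha, rfl⟩ _ ⟨b, hb, rfl⟩
    refine (hφ.conn v hv a ha b hb).map f1 fun x y hxy hx hy => ?_
    exact ⟨hS.adj_left (hφ.sub v hv hx) (hφ.sub v hv hy) hxy, ⟨x, hx, rfl⟩, ⟨y, hy, rfl⟩⟩
  · rw [Set.disjoint_left]
    rintro _ ⟨a, ha, rfl⟩ ⟨b, hb, hba⟩
    obtain rfl := hS.injOn_left (hφ.sub v hv hb) (hφ.sub u hu ha) hba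
    exact Set.disjoint_left.1 (hφ.disj u hu v hv huv) ha hb
  · intro u hu v hv h
    obtain ⟨a, ha, b, hb, hab⟩ := hφ.edge u hu v hv h
    exact ⟨f1 a, ⟨a, ha, rfl⟩, f1 b, ⟨b, hb, rfl⟩,
      hS.adj_left (hφ.sub u hu ha) (hφ.sub v hv hb) hab⟩
  · rintro v hv hb _ ⟨a, ha, rfl⟩
    rw [hS.bnd_left a (hφ.sub v hv ha)]
    exact hφ.bnd_none v hv hb a ha
  · intro v hv i hb
    obtain ⟨hidx, a, ha, hai⟩ := hφ.bnd_some v hv i hb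
    refine ⟨?_, f1 a, ⟨a, ha, rfl⟩, by rwa [hS.bnd_left a (hφ.sub v hv ha)]⟩
    rintro _ ⟨c, hc, rfl⟩
    rw [hS.bnd_left c (hφ.sub v hv hc)]
    exact hidx c hc

lemma MinorModel.sum {H H1 H2 G : BLG Empty} {ψ1 ψ2 : ℕ → Set ℕ} (hH : IsSum H H1 H2 id id)
    (m1 : MinorModel H1 G ψ1) (m2 : MinorModel H2 G ψ2)
    (hdisj : ∀ u ∈ H1.verts, ∀ v ∈ H2.verts, u ≠ v → Disjoint (ψ1 u) (ψ2 v))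
    (hmeet : ∀ w ∈ H1.verts, w ∈ H2.verts → (ψ1 w ∩ ψ2 w).Nonempty) :
    MinorModel H G fun w => {x | (w ∈ H1.verts ∧ x ∈ ψ1 w) ∨ (w ∈ H2.verts ∧ x ∈ ψ2 w)} := by
  set Φ : ℕ → Set ℕ := fun w => {x | (w ∈ H1.verts ∧ x ∈ ψ1 w) ∨ (w ∈ H2.verts ∧ x ∈ ψ2 w)}
  have hcover : ∀ w ∈ H.verts, w ∈ H1.verts ∨ w ∈ H2.verts := by
    intro w hw
    simpa only [hH.verts_eq, Set.image_id, Set.mem_union] using hw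
  have hbnd1 : ∀ w ∈ H1.verts, H.bnd w = H1.bnd w := hH.bnd_left
  have hbnd2 : ∀ w ∈ H2.verts, H.bnd w = H2.bnd w := hH.bnd_right
  refine ⟨?_, ?_, ?_, ?_, ?_, ?_, ?_, fun _ _ x => x.elim⟩
  · rintro w - x (⟨hw, hx⟩ | ⟨hw, hx⟩)
    exacts [m1.sub w hw hx, m2.sub w hw hx]
  · intro w hw
    rcases hcover w hw with hw' | hw'
    · obtain ⟨x, hx⟩ := m1.nonempty w hw'
      exact ⟨x, Or.inl ⟨hw', hx⟩⟩
    · obtain ⟨x, hx⟩ := m2.nonempty w hw'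
      exact ⟨x, Or.inr ⟨hw', hx⟩⟩
  · have reach1 : ∀ w (hw : w ∈ H1.verts), ∀ x ∈ ψ1 w, ∀ y ∈ ψ1 w, ReachIn G (Φ w) x y :=
      fun w hw x hx y hy => (m1.conn w hw x hx y hy).mono fun z hz => Or.inl ⟨hw, hz⟩
    have reach2 : ∀ w (hw : w ∈ H2.verts), ∀ x ∈ ψ2 w, ∀ y ∈ ψ2 w, ReachIn G (Φ w) x y :=
      fun w hw x hx y hy => (m2.conn w hw x hx y hy).mono fun z hz => Or.inr ⟨hw, hz⟩
    rintro w - x (⟨hw, hx⟩ | ⟨hw, hx⟩) y (⟨hw', hy⟩ | ⟨hw', hy⟩)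
    · exact reach1 w hw x hx y hy
    · obtain ⟨z, hz1, hz2⟩ := hmeet w hw hw'
      exact (reach1 w hw x hx z hz1).trans (reach2 w hw' z hz2 y hy)
    · obtain ⟨z, hz1, hz2⟩ := hmeet w hw' hw
      exact (reach2 w hw x hx z hz2).trans (reach1 w hw' z hz1 y hy)
    · exact reach2 w hw x hx y hy
  · intro u _ v _ huv
    rw [Set.disjoint_left]
    rintro x (⟨hu, hxu⟩ | ⟨hu, hxu⟩) (⟨hv, hxv⟩ | ⟨hv, hxv⟩)
    · exact Set.disjoint_left.1 (m1.disj u hu v hv huv) hxu hxv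
    · exact Set.disjoint_left.1 (hdisj u hu v hv huv) hxu hxv
    · exact Set.disjoint_right.1 (hdisj v hv u hu huv.symm) hxu hxv
    · exact Set.disjoint_left.1 (m2.disj u hu v hv huv) hxu hxv
  · intro u _ v _ huv
    rcases (hH.adj_iff u v).1 huv with ⟨_, hu, _, hv, huv, rfl, rfl⟩ |
      ⟨_, hu, _, hv, huv, rfl, rfl⟩
    · obtain ⟨x, hx, y, hy, hxy⟩ := m1.edge u hu v hv huv
      exact ⟨x, Or.inl ⟨hu, hx⟩, y, Or.inl ⟨hv, hy⟩, hxy⟩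
    · obtain ⟨x, hx, y, hy, hxy⟩ := m2.edge u hu v hv huv
      exact ⟨x, Or.inr ⟨hu, hx⟩, y, Or.inr ⟨hv, hy⟩, hxy⟩
  · rintro w - hbw x (⟨hw, hx⟩ | ⟨hw, hx⟩)
    · exact m1.bnd_none w hw (hbnd1 w hw ▸ hbw) x hx
    · exact m2.bnd_none w hw (hbnd2 w hw ▸ hbw) x hx
  · intro w hw i hbw
    refine ⟨?_, ?_⟩
    · rintro x (⟨hw, hx⟩ | ⟨hw, hx⟩)
      · exact (m1.bnd_some w hw i (hbnd1 w hw ▸ hbw)).1 x hx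
      · exact (m2.bnd_some w hw i (hbnd2 w hw ▸ hbw)).1 x hx
    · rcases hcover w hw with hw' | hw'
      · obtain ⟨-, x, hx, hxi⟩ := m1.bnd_some w hw' i (hbnd1 w hw' ▸ hbw)
        exact ⟨x, Or.inl ⟨hw', hx⟩, hxi⟩
      · obtain ⟨-, x, hx, hxi⟩ := m2.bnd_some w hw' i (hbnd2 w hw' ▸ hbw)
        exact ⟨x, Or.inr ⟨hw', hx⟩, hxi⟩

lemma IsSum.minor_left {H G G1 G2 : BLG Empty} {f1 f2 : ℕ → ℕ} (hS : IsSum G G1 G2 f1 f2)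
    (hm : Minor H G1) : Minor H G :=
  let ⟨_, hφ⟩ := hm
  ⟨_, hS.minorModel_image hφ⟩

lemma IsSum.minor {H H1 H2 G G1 G2 : BLG Empty} {f1 f2 : ℕ → ℕ} (hH : IsSum H H1 H2 id id)
    (hG : IsSum G G1 G2 f1 f2) (m1 : Minor H1 G1) (m2 : Minor H2 G2) : Minor H G := by
  obtain ⟨φ1, hφ1⟩ := m1
  obtain ⟨φ2, hφ2⟩ := m2
  refine ⟨_, (hG.minorModel_image hφ1).sum hH (hG.symm.minorModel_image hφ2) ?_ ?_⟩
  · intro u hu v hv huv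
    rw [Set.disjoint_left]
    rintro _ ⟨a, ha, rfl⟩ ⟨b, hb, hba⟩
    obtain ⟨i, hai, hbi⟩ := (hG.eq_iff a (hφ1.sub u hu ha) b (hφ2.sub v hv hb)).1 hba.symm
    exact huv ((hH.eq_iff u hu v hv).2 ⟨i, hφ1.bnd_of_mem hu ha hai, hφ2.bnd_of_mem hv hb hbi⟩)
  · intro w hw1 hw2
    obtain ⟨i, hi1, hi2⟩ := (hH.eq_iff w hw1 w hw2).1 rfl
    obtain ⟨-, a, ha, hai⟩ := hφ1.bnd_some w hw1 i hi1
    obtain ⟨-, b, hb, hbi⟩ := hφ2.bnd_some w hw2 i hi2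
    exact ⟨f1 a, ⟨a, ha, rfl⟩, b, hb,
      ((hG.eq_iff a (hφ1.sub w hw1 ha) b (hφ2.sub w hw2 hb)).2 ⟨i, hai, hbi⟩).symm⟩

lemma isSum_unionOf_compl {t : ℕ} {H : BLG X} (hH : H.WF t) {Y : Set (BLG X)}
    (hY : Y ⊆ pcs H) : IsSum H (unionOf Y) (unionOf (pcs H \ Y)) id id where
  verts_eq := by
    rw [Set.image_id, Set.image_id]
    refine subset_antisymm (fun w hw => ?_)
      (Set.union_subset (unionOf_verts_subset hH hY) (unionOf_verts_subset hH Set.sdiff_subset))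
    obtain ⟨p, hp, hwp⟩ := exists_pcs_mem hw
    by_cases hpY : p ∈ Y
    · exact Or.inl (mem_unionOf_verts.2 ⟨p, hpY, hwp⟩)
    · exact Or.inr (mem_unionOf_verts.2 ⟨p, ⟨hp, hpY⟩, hwp⟩)
  adj_iff x y := by
    refine ⟨fun h => ?_, ?_⟩
    · obtain ⟨p, hp, hpxy⟩ := exists_pcs_adj hH h
      obtain ⟨-, hx, hy⟩ := pcs_adj hH hp hpxy
      by_cases hpY : p ∈ Y
      · exact Or.inl ⟨x, mem_unionOf_verts.2 ⟨p, hpY, hx⟩, y, mem_unionOf_verts.2 ⟨p, hpY, hy⟩,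
          ⟨p, hpY, hpxy⟩, rfl, rfl⟩
      · exact Or.inr ⟨x, mem_unionOf_verts.2 ⟨p, ⟨hp, hpY⟩, hx⟩,
          y, mem_unionOf_verts.2 ⟨p, ⟨hp, hpY⟩, hy⟩, ⟨p, ⟨hp, hpY⟩, hpxy⟩, rfl, rfl⟩
    · rintro (⟨_, -, _, -, ⟨p, hp, hpxy⟩, rfl, rfl⟩ | ⟨_, -, _, -, ⟨p, hp, hpxy⟩, rfl, rfl⟩)
      exacts [(pcs_adj hH (hY hp) hpxy).1, (pcs_adj hH hp.1 hpxy).1]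
  bnd_left u hu := (unionOf_bnd_eq hY hu).symm
  bnd_right v hv := (unionOf_bnd_eq Set.sdiff_subset hv).symm
  injOn_left := Set.injOn_id _
  injOn_right := Set.injOn_id _
  eq_iff u hu v hv := by
    rw [unionOf_bnd_eq hY hu, unionOf_bnd_eq Set.sdiff_subset hv]
    refine ⟨?_, fun ⟨i, hui, hvi⟩ => hH.2.2.2.2.2.1 u v i hui hvi⟩
    rintro (rfl : u = v)
    cases hbu : H.bnd u with
    | some i => exact ⟨i, rfl, rfl⟩
    | none =>
      obtain ⟨p, hpY, hup⟩ := mem_unionOf_verts.1 hu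
      obtain ⟨q, ⟨hq, hqY⟩, huq⟩ := mem_unionOf_verts.1 hv
      rw [eq_compPc_of_mem hH (hY hpY) hup hbu, ← eq_compPc_of_mem hH hq huq hbu] at hpY
      exact (hqY hpY).elim

def pullback (G1 : BLG X) (f : ℕ → ℕ) (φ : ℕ → Set ℕ) (w : ℕ) : Set ℕ := G1.verts ∩ f ⁻¹' φ w

namespace IsSum

variable {G G1 G2 H : BLG X} {f1 f2 : ℕ → ℕ} {φ : ℕ → Set ℕ}

/-- A path of the sum inside `S` between two vertices of `G1` can only leave `G1` through
vertices shared with `G2`; if `S` contains at most one of those, the path can be shortcut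
inside `G1`. -/
lemma reachIn_preimage (hS : IsSum G G1 G2 f1 f2) {S : Set ℕ}
    (hshared : ∀ x ∈ S, ∀ y ∈ S, x ∈ f1 '' G1.verts → x ∈ f2 '' G2.verts →
      y ∈ f1 '' G1.verts → y ∈ f2 '' G2.verts → x = y)
    {a b : ℕ} (ha : a ∈ G1.verts) (hb : b ∈ G1.verts ∩ f1 ⁻¹' S)
    (h : ReachIn G S (f1 a) (f1 b)) : ReachIn G1 (G1.verts ∩ f1 ⁻¹' S) a b := by
  -- Along the path, `u` is reached from `a` in `G1` whenever `f1 u` is the current vertex, or the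
  -- current vertex lies outside `G1` and `f1 u` is the (unique) shared vertex of `S`.
  suffices key : ∀ c, ReachIn G S (f1 a) c → ∀ u ∈ G1.verts ∩ f1 ⁻¹' S,
      (f1 u = c ∨ (c ∉ f1 '' G1.verts ∧ f1 u ∈ f2 '' G2.verts)) →
      ReachIn G1 (G1.verts ∩ f1 ⁻¹' S) a u from key _ h b hb (Or.inl rfl)
  intro c hc
  induction hc with
  | refl =>
    rintro u hu (h | ⟨h, -⟩)
    · obtain rfl := hS.injOn_left hu.1 ha h
      exact .refl
    · exact (h ⟨a, ha, rfl⟩).elim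
  | tail _ hcd ih =>
    rintro u hu hud
    obtain ⟨hadj, hcS, hdS⟩ := hcd
    rcases (hS.adj_iff _ _).1 hadj with ⟨u', hu', v', hv', h', rfl, rfl⟩ |
      ⟨u', hu', v', hv', -, rfl, rfl⟩
    · rcases hud with h | ⟨h, -⟩
      · obtain rfl := hS.injOn_left hu.1 hv' h
        exact (ih u' ⟨hu', hcS⟩ (Or.inl rfl)).tail ⟨h', ⟨hu', hcS⟩, hu⟩
      · exact (h ⟨v', hv', rfl⟩).elim
    · have hu2 : f1 u ∈ f2 '' G2.verts := hud.elim (fun h => h ▸ ⟨v', hv', rfl⟩) (·.2)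
      refine ih u hu ?_
      by_cases hc1 : f2 u' ∈ f1 '' G1.verts
      · exact Or.inl (hshared _ hu.2 _ hcS ⟨u, hu.1, rfl⟩ hu2 hc1 ⟨u', hu', rfl⟩)
      · exact Or.inr ⟨hc1, hu2⟩

lemma reachIn_pullback (hS : IsSum G G1 G2 f1 f2) (hinj : G.BndInjOn) (hφ : MinorModel H G φ)
    {w a b : ℕ} (hw : w ∈ H.verts) (ha : a ∈ pullback G1 f1 φ w) (hb : b ∈ pullback G1 f1 φ w) :
    ReachIn G1 (pullback G1 f1 φ w) a b :=
  hS.reachIn_preimage (fun _ hx _ hy hx1 hx2 hy1 hy2 => hφ.eq_of_bnd_ne_none hinj hw hx hy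
    (hS.bnd_ne_none hx1 hx2) (hS.bnd_ne_none hy1 hy2)) ha.1 hb (hφ.conn w hw _ ha.2 _ hb.2)

/-- A branch set that meets `G1` enters it through a shared vertex, and shared vertices are
boundary vertices. -/
lemma exists_bnd_pullback (hS : IsSum G G1 G2 f1 f2) (hφ : MinorModel H G φ) {w i : ℕ}
    (hw : w ∈ H.verts) (hi : H.bnd w = some i) (hne : (pullback G1 f1 φ w).Nonempty) :
    ∃ u ∈ pullback G1 f1 φ w, G1.bnd u = some i := by
  obtain ⟨hidx, g, hg, hgi⟩ := hφ.bnd_some w hw i hi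
  suffices ∃ d ∈ φ w, d ∈ f1 '' G1.verts ∧ G.bnd d ≠ none by
    obtain ⟨d, hd, ⟨u, hu, rfl⟩, hdb⟩ := this
    exact ⟨u, ⟨hu, hd⟩, hS.bnd_left u hu ▸ (hidx _ hd).resolve_left hdb⟩
  by_cases hg1 : g ∈ f1 '' G1.verts
  · exact ⟨g, hg, hg1, by simp [hgi]⟩
  · obtain ⟨u, hu, hfu⟩ := hne
    obtain ⟨c, d, hcd, -, hd, hc1, hd1⟩ :=
      (hφ.conn w hw g hg _ hfu).exists_adj_of_notMem_of_mem hg1 ⟨u, hu, rfl⟩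
    exact ⟨d, hd, hd1, hS.bnd_ne_none hd1 (hS.mem_right_of_adj hcd (Or.inl hc1)).2⟩

/-- The branch set of an interior vertex contains no shared vertex, so it cannot cross from one
summand to the other. -/
lemma disjoint_of_mem_left (hS : IsSum G G1 G2 f1 f2) (hφ : MinorModel H G φ) {w x : ℕ}
    (hw : w ∈ interior H) (hx : x ∈ φ w) (hx1 : x ∈ f1 '' G1.verts) :
    Disjoint (φ w) (f2 '' G2.verts) := by
  have hshared : ∀ y ∈ φ w, y ∈ f1 '' G1.verts → y ∉ f2 '' G2.verts := fun y hy hy1 hy2 =>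
    hS.bnd_ne_none hy1 hy2 (hφ.bnd_none w hw.1 hw.2 y hy)
  refine Set.disjoint_left.2 fun y hy hy2 => ?_
  by_cases hy1 : y ∈ f1 '' G1.verts
  · exact hshared y hy hy1 hy2
  · obtain ⟨c, d, hcd, hc, -, hc1, hd1⟩ :=
      (hφ.conn w hw.1 x hx y hy).exists_adj_of_notMem_of_mem (T := (f1 '' G1.verts)ᶜ)
        (not_not.2 hx1) hy1
    exact hshared c hc (not_not.1 hc1) (hS.mem_right_of_adj hcd (Or.inr hd1)).1

lemma disjoint_right_or_disjoint_left (hS : IsSum G G1 G2 f1 f2) (hφ : MinorModel H G φ) {w : ℕ}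
    (hw : w ∈ interior H) :
    Disjoint (φ w) (f2 '' G2.verts) ∨ Disjoint (φ w) (f1 '' G1.verts) := by
  obtain ⟨x, hx⟩ := hφ.nonempty w hw.1
  rcases hS.verts_eq ▸ hφ.sub w hw.1 hx with hx1 | hx2
  · exact Or.inl (hS.disjoint_of_mem_left hφ hw hx hx1)
  · exact Or.inr (hS.symm.disjoint_of_mem_left hφ hw hx hx2)

lemma disjoint_of_reachIn (hS : IsSum G G1 G2 f1 f2) (hφ : MinorModel H G φ) {v w : ℕ}
    (h : ReachIn H (interior H) v w) (hv : Disjoint (φ v) (f2 '' G2.verts)) :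
    Disjoint (φ w) (f2 '' G2.verts) := by
  induction h with
  | refl => exact hv
  | tail _ hcd ih =>
    obtain ⟨hadj, hc, hd⟩ := hcd
    obtain ⟨x, hx, y, hy, hxy⟩ := hφ.edge _ hc.1 _ hd.1 hadj
    obtain ⟨-, -, v', hv', -, -, rfl⟩ :=
      hS.exists_adj_left hxy (Or.inl (Set.disjoint_left.1 ih hx))
    exact hS.disjoint_of_mem_left hφ hd hy ⟨v', hv', rfl⟩

lemma component_side (hS : IsSum G G1 G2 f1 f2) (hφ : MinorModel H G φ) {C : Set ℕ}
    (hC : IsCompOf H (interior H) C) :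
    (∀ c ∈ C, Disjoint (φ c) (f2 '' G2.verts)) ∨ (∀ c ∈ C, Disjoint (φ c) (f1 '' G1.verts)) := by
  obtain ⟨v, hv, rfl⟩ := hC
  rcases hS.disjoint_right_or_disjoint_left hφ hv with h | h
  · exact Or.inl fun w hw => hS.disjoint_of_reachIn hφ hw.2 h
  · exact Or.inr fun w hw => hS.symm.disjoint_of_reachIn hφ hw.2 h

end IsSum

lemma MinorModel.disjoint_pullback {H G G1 : BLG X} {φ : ℕ → Set ℕ} (hφ : MinorModel H G φ)
    (f : ℕ → ℕ) {u v : ℕ} (hu : u ∈ H.verts) (hv : v ∈ H.verts) (huv : u ≠ v) :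
    Disjoint (pullback G1 f φ u) (pullback G1 f φ v) :=
  ((hφ.disj u hu v hv huv).preimage f).mono Set.inter_subset_right Set.inter_subset_right

section Decomposition

variable {t : ℕ} {G G1 G2 H : BLG Empty} {f1 f2 : ℕ → ℕ} {φ : ℕ → Set ℕ}

lemma minorModel_unionOf (hH : H.WF t) {P : Set (BLG Empty)} (hP : P ⊆ pcs H)
    {ψ : ℕ → Set ℕ} (hm : ∀ p ∈ P, MinorModel p G ψ)
    (hdisj : ∀ u ∈ H.verts, ∀ v ∈ H.verts, u ≠ v → Disjoint (ψ u) (ψ v)) :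
    MinorModel (unionOf P) G ψ := by
  have hbnd : ∀ p ∈ P, ∀ w ∈ p.verts, (unionOf P).bnd w = p.bnd w := fun p hp w hw => by
    rw [pcs_bnd_eq (hP hp) hw, unionOf_bnd_eq hP (mem_unionOf_verts.2 ⟨p, hp, hw⟩)]
  have hsub := unionOf_verts_subset hH hP
  refine ⟨?_, ?_, ?_, fun u hu v hv => hdisj u (hsub hu) v (hsub hv), ?_, ?_, ?_,
    fun _ _ x => x.elim⟩
  · intro w hw
    obtain ⟨p, hp, hwp⟩ := mem_unionOf_verts.1 hw
    exact (hm p hp).sub w hwp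
  · intro w hw
    obtain ⟨p, hp, hwp⟩ := mem_unionOf_verts.1 hw
    exact (hm p hp).nonempty w hwp
  · intro w hw
    obtain ⟨p, hp, hwp⟩ := mem_unionOf_verts.1 hw
    exact (hm p hp).conn w hwp
  · rintro u - v - ⟨p, hp, hpuv⟩
    obtain ⟨-, hu, hv⟩ := pcs_adj hH (hP hp) hpuv
    exact (hm p hp).edge u hu v hv hpuv
  · intro w hw hbw
    obtain ⟨p, hp, hwp⟩ := mem_unionOf_verts.1 hw
    exact (hm p hp).bnd_none w hwp (hbnd p hp w hwp ▸ hbw)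
  · intro w hw i hbw
    obtain ⟨p, hp, hwp⟩ := mem_unionOf_verts.1 hw
    exact (hm p hp).bnd_some w hwp i (hbnd p hp w hwp ▸ hbw)

namespace IsSum

lemma minorModel_pullback (hS : IsSum G G1 G2 f1 f2) (hinj : G.BndInjOn) (hH : H.WF t)
    (hφ : MinorModel H G φ) {p : BLG Empty} (hp : p ∈ pcs H)
    (hne : ∀ w ∈ p.verts, (pullback G1 f1 φ w).Nonempty)
    (hadj : ∀ a b, p.Adj a b →
      ∃ u ∈ pullback G1 f1 φ a, ∃ v ∈ pullback G1 f1 φ b, G1.Adj u v) :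
    MinorModel p G1 (pullback G1 f1 φ) := by
  have hsub := pcs_verts_subset hH hp
  refine ⟨fun w _ u hu => hu.1, hne,
    fun w hw _ ha _ hb => hS.reachIn_pullback hinj hφ (hsub hw) ha hb,
    fun u hu v hv => hφ.disjoint_pullback f1 (hsub hu) (hsub hv), fun u _ v _ => hadj u v, ?_, ?_,
    fun _ _ x => x.elim⟩
  · intro w hw hbw u hu
    rw [← hS.bnd_left u hu.1]
    exact hφ.bnd_none w (hsub hw) (pcs_bnd_eq hp hw ▸ hbw) _ hu.2
  · intro w hw i hbw
    rw [pcs_bnd_eq hp hw] at hbw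
    refine ⟨fun u hu => ?_, hS.exists_bnd_pullback hφ (hsub hw) hbw (hne w hw)⟩
    rw [← hS.bnd_left u hu.1]
    exact (hφ.bnd_some w (hsub hw) i hbw).1 _ hu.2

lemma minorModel_singlePc (hS : IsSum G G1 G2 f1 f2) (hinj : G.BndInjOn) (hH : H.WF t)
    (hφ : MinorModel H G φ) {v i : ℕ} (hv : v ∈ H.verts) (hi : H.bnd v = some i)
    (hne : (pullback G1 f1 φ v).Nonempty) :
    MinorModel (singlePc v i ∅) G1 (pullback G1 f1 φ) :=
  hS.minorModel_pullback hinj hH hφ (mem_pcs_single hv hi)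
    (fun w hw => by obtain rfl : w = v := hw; exact hne) fun _ _ h => h.elim

lemma minorModel_edgePc (hS : IsSum G G1 G2 f1 f2) (hinj : G.BndInjOn) (hH : H.WF t)
    (hφ : MinorModel H G φ) (h1 : ∀ u v, G1.Adj u v → G1.Adj v u) {u v i j a b : ℕ}
    (huv : H.Adj u v) (hu : H.bnd u = some i) (hv : H.bnd v = some j)
    (ha : a ∈ pullback G1 f1 φ u) (hb : b ∈ pullback G1 f1 φ v) (hab : G1.Adj a b) :
    MinorModel (edgePc u v i j) G1 (pullback G1 f1 φ) := by
  refine hS.minorModel_pullback hinj hH hφ (mem_pcs_edge huv hu hv) ?_ ?_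
  · rintro w (rfl | rfl)
    exacts [⟨a, ha⟩, ⟨b, hb⟩]
  · rintro _ _ (⟨rfl, rfl⟩ | ⟨rfl, rfl⟩)
    exacts [⟨a, ha, b, hb, hab⟩, ⟨b, hb, a, ha, h1 a b hab⟩]

lemma minorModel_compPc (hS : IsSum G G1 G2 f1 f2) (hinj : G.BndInjOn) (hH : H.WF t)
    (hφ : MinorModel H G φ) {C : Set ℕ} (hC : IsCompOf H (interior H) C)
    (hside : ∀ c ∈ C, Disjoint (φ c) (f2 '' G2.verts)) :
    MinorModel (compPc H C) G1 (pullback G1 f1 φ) := by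
  have hCint : C ⊆ interior H := by
    obtain ⟨v, -, rfl⟩ := hC
    exact fun _ h => h.1
  have hmemC : ∀ w ∈ (compPc H C).verts, H.bnd w = none → w ∈ C := fun w hw hbw =>
    hw.resolve_right fun h => h.2.1 hbw
  have hedge : ∀ a b, H.Adj a b → a ∈ C ∨ b ∈ C →
      ∃ u ∈ pullback G1 f1 φ a, ∃ v ∈ pullback G1 f1 φ b, G1.Adj u v := by
    intro a b hab habC
    obtain ⟨x, hx, y, hy, hxy⟩ :=
      hφ.edge a (hH.2.2.2.1 _ _ hab).1 b (hH.2.2.2.1 _ _ hab).2 hab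
    obtain ⟨u, hu, v, hv, huv, rfl, rfl⟩ := hS.exists_adj_left hxy <|
      habC.imp (fun ha => Set.disjoint_left.1 (hside a ha) hx)
        (fun hb => Set.disjoint_left.1 (hside b hb) hy)
    exact ⟨u, ⟨hu, hx⟩, v, ⟨hv, hy⟩, huv⟩
  refine hS.minorModel_pullback hinj hH hφ (Or.inr ⟨C, hC, rfl⟩) ?_ ?_
  · rintro w (hw | ⟨-, -, c, hc, hwc⟩)
    · obtain ⟨x, hx⟩ := hφ.nonempty w (hCint hw).1
      rcases hS.verts_eq ▸ hφ.sub w (hCint hw).1 hx with ⟨u, hu, rfl⟩ | hx2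
      · exact ⟨u, hu, hx⟩
      · exact (Set.disjoint_left.1 (hside w hw) hx hx2).elim
    · obtain ⟨u, hu, -⟩ := hedge w c hwc (Or.inr hc)
      exact ⟨u, hu⟩
  · rintro a b ⟨hab, ha, hb, hnb⟩
    refine hedge a b hab ?_
    by_cases hba : H.bnd a = none
    · exact Or.inl (hmemC a ha hba)
    · exact Or.inr (hmemC b hb (not_not.1 fun h => hnb ⟨hba, h⟩))

lemma minorModel_piece (hS : IsSum G G1 G2 f1 f2) (hinj : G.BndInjOn) (hH : H.WF t)
    (h1 : ∀ u v, G1.Adj u v → G1.Adj v u) (h2 : ∀ u v, G2.Adj u v → G2.Adj v u)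
    (hφ : MinorModel H G φ) {p : BLG Empty} (hp : p ∈ pcs H) :
    MinorModel p G1 (pullback G1 f1 φ) ∨ MinorModel p G2 (pullback G2 f2 φ) := by
  rcases hp with (((⟨v, hv, i, hi, rfl⟩ | ⟨_, _, _, _, l, _, _⟩) |
    ⟨u, v, i, j, huv, hu, hv, rfl⟩) | ⟨C, hC, rfl⟩)
  · obtain ⟨-, g, hg, -⟩ := hφ.bnd_some v hv i hi
    rcases hS.verts_eq ▸ hφ.sub v hv hg with ⟨a, ha, rfl⟩ | ⟨a, ha, rfl⟩
    · exact Or.inl (hS.minorModel_singlePc hinj hH hφ hv hi ⟨a, ha, hg⟩)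
    · exact Or.inr (hS.symm.minorModel_singlePc hinj hH hφ hv hi ⟨a, ha, hg⟩)
  · exact l.elim
  · obtain ⟨x, hx, y, hy, hxy⟩ :=
      hφ.edge u (hH.2.2.2.1 _ _ huv).1 v (hH.2.2.2.1 _ _ huv).2 huv
    rcases (hS.adj_iff x y).1 hxy with ⟨a, ha, b, hb, hab, rfl, rfl⟩ |
      ⟨a, ha, b, hb, hab, rfl, rfl⟩
    · exact Or.inl (hS.minorModel_edgePc hinj hH hφ h1 huv hu hv ⟨ha, hx⟩ ⟨hb, hy⟩ hab)
    · exact Or.inr (hS.symm.minorModel_edgePc hinj hH hφ h2 huv hu hv ⟨ha, hx⟩ ⟨hb, hy⟩ hab)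
  · rcases hS.component_side hφ hC with h | h
    · exact Or.inl (hS.minorModel_compPc hinj hH hφ hC h)
    · exact Or.inr (hS.symm.minorModel_compPc hinj hH hφ hC h)

lemma exists_split_of_minor (hS : IsSum G G1 G2 f1 f2) (hinj : G.BndInjOn) (hH : H.WF t)
    (h1 : ∀ u v, G1.Adj u v → G1.Adj v u) (h2 : ∀ u v, G2.Adj u v → G2.Adj v u)
    (hm : Minor H G) :
    ∃ Y ⊆ pcs H, Minor (unionOf Y) G1 ∧ Minor (unionOf (pcs H \ Y)) G2 := by
  obtain ⟨φ, hφ⟩ := hm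
  set Y := {p ∈ pcs H | MinorModel p G1 (pullback G1 f1 φ)}
  have hrest : ∀ p ∈ pcs H \ Y, MinorModel p G2 (pullback G2 f2 φ) := fun p hp =>
    (hS.minorModel_piece hinj hH h1 h2 hφ hp.1).resolve_left fun h => hp.2 ⟨hp.1, h⟩
  exact ⟨Y, fun p hp => hp.1,
    ⟨pullback G1 f1 φ, minorModel_unionOf hH (fun p hp => hp.1) (fun p hp => hp.2)
      fun u hu v hv => hφ.disjoint_pullback f1 hu hv⟩,
    ⟨pullback G2 f2 φ, minorModel_unionOf hH Set.sdiff_subset hrest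
      fun u hu v hv => hφ.disjoint_pullback f2 hu hv⟩⟩

end IsSum

end Decomposition

def splitSide (Pi : Set (BLG X)) (G : BLG X) : Set (BLG X) :=
  Pi ∪ {H | (∃ P ∈ Pi, ∃ Y ⊆ pcs P, Iso H (unionOf Y)) ∧ ¬ Minor H G}

lemma splitMem_splitSide (F : Set (BLG X)) (t : ℕ) {Pi : Set (BLG X)} {G1 G2 : BLG X}
    (h : ∀ H ∈ Pi, ∀ Y ⊆ pcs H, Minor (unionOf Y) G1 → ¬ Minor (unionOf (pcs H \ Y)) G2) :
    SplitMem F t Pi (splitSide Pi G1) (splitSide Pi G2) := by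
  refine ⟨Set.subset_union_left, Set.subset_union_left, fun H hH Y hY => ?_, ?_, ?_⟩
  · by_cases hm1 : Minor (unionOf Y) G1
    · exact Or.inr ⟨_, Or.inr ⟨⟨H, hH, _, Set.sdiff_subset, iso_refl _⟩, h H hH Y hY hm1⟩,
        iso_refl _⟩
    · exact Or.inl ⟨_, Or.inr ⟨⟨H, hH, Y, hY, iso_refl _⟩, hm1⟩, iso_refl _⟩
  all_goals
    rintro H (hH | ⟨hH, -⟩)
    exacts [Or.inl hH, Or.inr (Or.inl hH)]

lemma not_exists_minor_splitSide {Pi : Set (BLG X)} {G : BLG X} (h : ∀ H ∈ Pi, ¬ Minor H G) :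
    ¬ ∃ H ∈ splitSide Pi G, Minor H G := by
  rintro ⟨H, hH | ⟨-, hn⟩, hm⟩
  exacts [h H hH hm, hn hm]

theorem stmt13_general (t : ℕ) (F : Set (BLG Empty))
    (Pi : Set (BLG Empty)) (hPi : ∀ p ∈ Pi, p.WF t)
    (G1 G2 : BLG Empty) (h1 : G1.WF t) (h2 : G2.WF t) :
    (¬ ∃ H ∈ Pi, Minor H (glue G1 G2)) ↔
      ∃ Pi1 Pi2 : Set (BLG Empty), SplitMem F t Pi Pi1 Pi2 ∧
        (¬ ∃ H ∈ Pi1, Minor H G1) ∧ (¬ ∃ H ∈ Pi2, Minor H G2) := by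
  have hS := isSum_glue h1 h2
  constructor
  · intro hno
    refine ⟨splitSide Pi G1, splitSide Pi G2, splitMem_splitSide F t fun H hH Y hY m1 m2 => ?_,
      not_exists_minor_splitSide fun H hH hm => ?_, not_exists_minor_splitSide fun H hH hm => ?_⟩
    · exact hno ⟨H, hH, (isSum_unionOf_compl (hPi H hH) hY).minor hS m1 m2⟩
    · exact hno ⟨H, hH, hS.minor_left hm⟩
    · exact hno ⟨H, hH, hS.symm.minor_left hm⟩
  · rintro ⟨Pi1, Pi2, hsplit, hn1, hn2⟩ ⟨H, hH, hm⟩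
    obtain ⟨Y, hY, m1, m2⟩ :=
      hS.exists_split_of_minor (hS.bndInjOn h1 h2) (hPi H hH) h1.2.1 h2.2.1 hm
    rcases hsplit.2.2.1 H hH Y hY with ⟨H', hH', hiso⟩ | ⟨H', hH', hiso⟩
    exacts [hn1 ⟨H', hH', m1.of_iso hiso⟩, hn2 ⟨H', hH', m2.of_iso hiso⟩]

/-- For a fixed finite set `F` of (unboundaried, unlabeled) graphs, a set
`Pi` of `t`-boundaried graphs, and `t`-boundaried graphs `G1`, `G2` with `G := G1 ⊕ G2`:
`G` has no boundaried `Pi`-minor iff there is `(Pi1, Pi2) ∈ split_F(Pi)` such that `G1` has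
no boundaried `Pi1`-minor and `G2` has no boundaried `Pi2`-minor. -/
theorem stmt13 (t : ℕ) (F : Set (BLG Empty)) (hFfin : F.Finite) (hF : ∀ f ∈ F, f.WF 0)
    (Pi : Set (BLG Empty)) (hPi : ∀ p ∈ Pi, p.WF t)
    (G1 G2 : BLG Empty) (h1 : G1.WF t) (h2 : G2.WF t) :
    (¬ ∃ H ∈ Pi, Minor H (glue G1 G2)) ↔
      ∃ Pi1 Pi2 : Set (BLG Empty), SplitMem F t Pi Pi1 Pi2 ∧
        (¬ ∃ H ∈ Pi1, Minor H G1) ∧ (¬ ∃ H ∈ Pi2, Minor H G2) :=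
  stmt13_general t F Pi hPi G1 G2 h1 h2

end

end FDel
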